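/- Let X and S be types, f : X → S, T a transition relation on X, and T_S a transition relation on S that is forward-simulated by T along f (for all s, s' with T_S s s' and every x with f x = s, there exists x' with f x' = s' and T x x'). Let ρ = [P₁, …, P_k] be a query of predicates on S. If there exists a finite T_S-path s₀, …, s_n such that ρ conforms with it, then for every x₀ with f x₀ = s₀ there exists a finite T-path x₀, …, x_n such that the query [P₁ ∘ f, …, P_k ∘ f] conforms with it. -/

import Mathlib

/-! The abstract path is lifted one step at a time: forward simulation turns each abstract
transition out of `f (x i) = s i` into a concrete transition to some `x (i + 1)` over `s (i + 1)`.
The lifted path then visits states over the same abstract states at the same indices, so the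
witness indices for `ρ` on `s` also witness the pulled-back query on the lift. -/

/-- A query `ρ` (a list of predicates on `S`) conforms with a finite sequence
`s 0, …, s n` if there are strictly increasing indices `i₁ < … < i_k ≤ n` such that
the `j`-th predicate holds at `s (i_j)`. -/
def Conforms {S : Type*} (ρ : List (S → Prop)) (s : ℕ → S) (n : ℕ) : Prop :=
  ∃ idx : Fin ρ.length → ℕ, StrictMono idx ∧ (∀ j, idx j ≤ n) ∧
    ∀ j, ρ.get j (s (idx j))

section Conforms

variable {X S : Type*}

theorem Conforms.congr {ρ : List (S → Prop)} {s s' : ℕ → S} {n : ℕ}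
    (h : ∀ i ≤ n, s i = s' i) (hconf : Conforms ρ s n) : Conforms ρ s' n := by
  obtain ⟨idx, hmono, hle, hP⟩ := hconf
  exact ⟨idx, hmono, hle, fun j => h _ (hle j) ▸ hP j⟩

theorem conforms_map_comp_iff {ρ : List (S → Prop)} {f : X → S} {x : ℕ → X} {n : ℕ} :
    Conforms (ρ.map (· ∘ f)) x n ↔ Conforms ρ (f ∘ x) n := by
  have hlen : (ρ.map (· ∘ f)).length = ρ.length := List.length_map _
  constructor
  · rintro ⟨idx, hmono, hle, hP⟩
    refine ⟨idx ∘ Fin.cast hlen.symm, hmono.comp fun _ _ h => h, fun j => hle _, fun j => ?_⟩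
    simpa using hP (Fin.cast hlen.symm j)
  · rintro ⟨idx, hmono, hle, hP⟩
    refine ⟨idx ∘ Fin.cast hlen, hmono.comp fun _ _ h => h, fun j => hle _, fun j => ?_⟩
    simpa using hP (Fin.cast hlen j)

end Conforms

theorem exists_path_lift_of_forward_simulation {X S : Type*} {f : X → S}
    {T : X → X → Prop} {TS : S → S → Prop}
    (hsim : ∀ s s', TS s s' → ∀ x, f x = s → ∃ x', f x' = s' ∧ T x x')
    {n : ℕ} {s : ℕ → S} (hpath : ∀ i < n, TS (s i) (s (i + 1))) {x₀ : X} (h₀ : f x₀ = s 0) :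
    ∃ x : ℕ → X, x 0 = x₀ ∧ (∀ i < n, T (x i) (x (i + 1))) ∧ ∀ i ≤ n, f (x i) = s i := by
  choose! lift hlift using hsim
  let x : ℕ → X := fun i => Nat.rec x₀ (fun i xi => lift (s i) (s (i + 1)) xi) i
  have hstep : ∀ i < n, f (x i) = s i →
      f (x (i + 1)) = s (i + 1) ∧ T (x i) (x (i + 1)) :=
    fun i hi hxi => hlift _ _ (hpath i hi) _ hxi
  have hover : ∀ i ≤ n, f (x i) = s i := by
    intro i hi
    induction i with
    | zero => exact h₀
    | succ i ih => exact (hstep i hi (ih (by omega))).1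
  exact ⟨x, rfl, fun i hi => (hstep i hi (hover i hi.le)).2, hover⟩

/-- If an abstract path conforming with the query exists, then from any
concrete state abstracting to its initial state there is a concrete path conforming
with the pulled-back query (Proposition 1, Case 1). -/
theorem feasible_of_abstract_conforming_path {X S : Type*} (f : X → S)
    (T : X → X → Prop) (TS : S → S → Prop)
    (hsim : ∀ s s', TS s s' → ∀ x, f x = s → ∃ x', f x' = s' ∧ T x x')
    (ρ : List (S → Prop)) (n : ℕ) (s : ℕ → S)
    (hpath : ∀ i < n, TS (s i) (s (i + 1)))
    (hconf : Conforms ρ s n) :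
    ∀ x₀ : X, f x₀ = s 0 →
      ∃ x : ℕ → X, x 0 = x₀ ∧ (∀ i < n, T (x i) (x (i + 1))) ∧
        Conforms (ρ.map (fun P => P ∘ f)) x n := by
  intro x₀ h₀
  obtain ⟨x, hx₀, hxpath, hover⟩ := exists_path_lift_of_forward_simulation hsim hpath h₀
  exact ⟨x, hx₀, hxpath,
    conforms_map_comp_iff.mpr (hconf.congr fun i hi => (hover i hi).symm)⟩
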